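/- Capacitated vertex cover with non-uniform unsplittable demands, approximation bound: let ε ≥ 1 and let an ε-tight valid level scheme on G (with demand-based weights) with consistent edge assignment δ be given. Then Σ_{v : δ(v) ≠ ∅} ⌈(Σ_{e ∈ δ(v)} d_e)/k_v⌉·c_v ≤ ε·(2β/(β − 1) + 1)·Σ_{e ∈ E} d_e·μ·β^(−ℓ(e)). -/

import Mathlib

open scoped Classical

/-- `S_v(i)`: the total demand of the edges incident to `v` whose edge level equals `i`,
where the level of an edge is the maximum level of its two endpoints. -/
noncomputable def demLevelSum {V : Type*} [Fintype V] (G : SimpleGraph V)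
    (d : Sym2 V → ℝ) (ℓ : V → ℕ) (v : V) (i : ℕ) : ℝ :=
  ∑ u ∈ Finset.univ.filter (fun u => G.Adj v u ∧ max (ℓ u) (ℓ v) = i), d s(u, v)

/-- The demand-based weight of a vertex `v`: `W_v = Σ_i min{k_v, S_v(i)}·μ·β^(−i)`. -/
noncomputable def demWeight {V : Type*} [Fintype V] (G : SimpleGraph V)
    (d : Sym2 V → ℝ) (β μ : ℝ) (k : V → ℝ) (ℓ : V → ℕ) (v : V) : ℝ :=
  ∑' i : ℕ, min (k v) (demLevelSum G d ℓ v i) * μ * β ^ (-(i : ℤ))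

/-- `Σ_{e ∈ δ(v)} d_e`: the total demand of the edges assigned to `v` by the assignment `A`,
where `A u v` means that the edge `{u, v}` is assigned to its endpoint `v`. -/
noncomputable def assignedDemand {V : Type*} [Fintype V] (G : SimpleGraph V)
    (d : Sym2 V → ℝ) (A : V → V → Prop) (v : V) : ℝ :=
  ∑ u ∈ Finset.univ.filter (fun u => G.Adj v u ∧ A u v), d s(u, v)

/-- The level of an edge: the maximum of the levels of its endpoints. -/
noncomputable def edgeLevel {V : Type*} (ℓ : V → ℕ) : Sym2 V → ℕ :=
  Sym2.lift ⟨fun a b => max (ℓ a) (ℓ b), fun _ _ => max_comm _ _⟩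

/-! The cost of a vertex `v` is at most `(D_v / k_v + 1) c_v`, where `D_v` is its assigned
demand. By tightness `c_v < ε W_v`, and since only levels `≥ ℓ v` contribute to `W_v`, each
capped by `k_v`, a geometric series gives `W_v ≤ k_v μ β^{-ℓ(v)} β/(β-1)`. Hence the `D_v / k_v`
part costs at most `ε β/(β-1) D_v μ β^{-ℓ(v)}`, and these sum to `ε β/(β-1) T`, where
`T = Σ_e d_e μ β^{-ℓ(e)}`, because every edge is assigned once, to an endpoint of its own level.
The remaining `c_v < ε W_v` sum to at most `2 ε T`, since `min{k_v, S_v(i)} ≤ S_v(i)` charges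
every edge to both of its endpoints. Finally `β/(β-1) + 2 ≤ 2β/(β-1) + 1` as `β/(β-1) ≥ 1`. -/

open Finset

lemma sum_pow_le_pow_div_one_sub {K : Type*} [Field K] [LinearOrder K] [IsStrictOrderedRing K]
    {x : K} (hx₀ : 0 ≤ x) (hx₁ : x < 1) {m : ℕ} (s : Finset ℕ) (hs : ∀ i ∈ s, m ≤ i) :
    ∑ i ∈ s, x ^ i ≤ x ^ m / (1 - x) := by
  have hsub : s ⊆ Ico m (s.sup id + 1) := fun i hi =>
    mem_Ico.2 ⟨hs i hi, Nat.lt_succ_of_le (le_sup (f := id) hi)⟩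
  exact (sum_le_sum_of_subset_of_nonneg hsub fun i _ _ => pow_nonneg hx₀ i).trans
    (geom_sum_Ico_le_of_lt_one hx₀ hx₁)

lemma ceil_div_mul_le_add {D k c W X ε : ℝ} (hD : 0 ≤ D) (hk : 0 < k) (hc : 0 ≤ c)
    (hε : 0 ≤ ε) (hcW : c ≤ ε * W) (hW : W ≤ k * X) :
    (⌈D / k⌉ : ℝ) * c ≤ ε * (D * X) + ε * W :=
  calc (⌈D / k⌉ : ℝ) * c ≤ D / k * c + c := by
        nlinarith [Int.ceil_lt_add_one (D / k)]
    _ ≤ D / k * (ε * (k * X)) + ε * W := by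
        gcongr
        exact hcW.trans (by gcongr)
    _ = ε * (D * X) + ε * W := by
        field_simp

namespace SimpleGraph

variable {V : Type*} [Fintype V] (G : SimpleGraph V)

lemma sum_sum_adj_eq_sum_darts {M : Type*} [AddCommMonoid M] (f : V → V → M) :
    ∑ v, ∑ u ∈ univ.filter (G.Adj v), f v u = ∑ x : G.Dart, f x.fst x.snd := by
  rw [← sum_finset_product' (univ.filter fun p : V × V => G.Adj p.1 p.2) _ _ (by simp)]
  exact sum_bij' (fun p hp => ⟨p, (mem_filter.1 hp).2⟩) (fun x _ => x.toProd)
    (by simp) (by simp) (by simp) (by simp) (by simp)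

lemma sum_darts_edge_eq_two_nsmul {M : Type*} [AddCommMonoid M] (F : Sym2 V → M) :
    ∑ x : G.Dart, F x.edge = 2 • ∑ e ∈ G.edgeFinset, F e := by
  rw [← sum_fiberwise_of_maps_to (g := Dart.edge) (t := G.edgeFinset) (by simp), smul_sum]
  refine sum_congr rfl fun e he => ?_
  rw [sum_congr rfl fun x hx => congrArg F (mem_filter.1 hx).2, sum_const,
    G.dart_edge_fiber_card e (mem_edgeFinset.1 he)]

lemma sum_sum_adj_eq_two_nsmul_sum_edgeFinset {M : Type*} [AddCommMonoid M] (F : Sym2 V → M) :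
    ∑ v, ∑ u ∈ univ.filter (G.Adj v), F s(u, v) = 2 • ∑ e ∈ G.edgeFinset, F e := by
  rw [sum_sum_adj_eq_sum_darts, ← sum_darts_edge_eq_two_nsmul]
  exact sum_congr rfl fun x _ => congrArg F Sym2.eq_swap

lemma sum_sum_adj_oriented_eq_sum_edgeFinset {M : Type*} [AddCommMonoid M] (A : V → V → Prop)
    (hA : ∀ u v, G.Adj u v → (A u v ∧ ¬ A v u) ∨ (A v u ∧ ¬ A u v)) (F : Sym2 V → M) :
    ∑ v, ∑ u ∈ univ.filter (fun u => G.Adj v u ∧ A u v), F s(u, v)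
      = ∑ e ∈ G.edgeFinset, F e := by
  have hfilter : ∀ v, ∑ u ∈ univ.filter (fun u => G.Adj v u ∧ A u v), F s(u, v)
      = ∑ u ∈ univ.filter (G.Adj v), if A u v then F s(u, v) else 0 := fun v => by
    rw [← sum_filter, filter_filter]
  rw [sum_congr rfl fun v _ => hfilter v, sum_sum_adj_eq_sum_darts, ← sum_filter]
  refine sum_bij (fun x _ => x.edge) (fun x _ => by simp) ?inj ?surj
    (fun x _ => congrArg F Sym2.eq_swap)
  case inj =>
    intro x hx y hy hxy
    obtain rfl | rfl := (G.dart_edge_eq_iff x y).1 hxy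
    · rfl
    · have := hA _ _ y.adj
      simp_all
  case surj =>
    intro e he
    induction e using Sym2.ind with
    | _ a b =>
      rcases hA a b (mem_edgeFinset.1 he) with h | h
      · exact ⟨⟨(b, a), (mem_edgeFinset.1 he).symm⟩, by simp [h.1], Sym2.eq_swap⟩
      · exact ⟨⟨(a, b), mem_edgeFinset.1 he⟩, by simp [h.1], rfl⟩

end SimpleGraph

section LevelScheme

variable {V : Type*} [Fintype V] (G : SimpleGraph V) (d : Sym2 V → ℝ) (β μ : ℝ) (k : V → ℝ)
  (ℓ : V → ℕ) (v : V)

lemma demLevelSum_eq_zero_of_notMem {i : ℕ}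
    (hi : i ∉ univ.image fun u => max (ℓ u) (ℓ v)) : demLevelSum G d ℓ v i = 0 :=
  sum_eq_zero fun u hu => absurd (mem_image.2 ⟨u, mem_univ u, (mem_filter.1 hu).2.2⟩) hi

lemma demWeight_eq_sum (hk : 0 ≤ k v) :
    demWeight G d β μ k ℓ v = ∑ i ∈ univ.image (fun u => max (ℓ u) (ℓ v)),
      min (k v) (demLevelSum G d ℓ v i) * μ * β ^ (-(i : ℤ)) :=
  tsum_eq_sum fun i hi => by
    rw [demLevelSum_eq_zero_of_notMem G d ℓ v hi, min_eq_right hk, zero_mul, zero_mul]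

lemma demWeight_le_sum_adj (hk : 0 ≤ k v) (hμ : 0 ≤ μ) (hβ : 0 < β) :
    demWeight G d β μ k ℓ v
      ≤ ∑ u ∈ univ.filter (G.Adj v), d s(u, v) * (μ * β ^ (-(edgeLevel ℓ s(u, v) : ℤ))) := by
  rw [demWeight_eq_sum G d β μ k ℓ v hk]
  calc _ ≤ ∑ i ∈ univ.image (fun u => max (ℓ u) (ℓ v)),
          demLevelSum G d ℓ v i * μ * β ^ (-(i : ℤ)) := by
        gcongr
        exact min_le_right _ _
    _ = _ := by
      rw [← sum_fiberwise_of_maps_to (g := fun u => max (ℓ u) (ℓ v))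
        fun u _ => mem_image_of_mem _ (mem_univ u)]
      refine sum_congr rfl fun i _ => ?_
      rw [demLevelSum, sum_mul, sum_mul, filter_filter]
      refine sum_congr rfl fun u hu => ?_
      rw [mul_assoc, ← (mem_filter.1 hu).2.2]
      rfl

lemma demWeight_le_capacity (hk : 0 ≤ k v) (hμ : 0 ≤ μ) (hβ : 1 < β) :
    demWeight G d β μ k ℓ v ≤ k v * μ * β ^ (-(ℓ v : ℤ)) * (β / (β - 1)) := by
  have hβ₀ : 0 < β := one_pos.trans hβ
  rw [demWeight_eq_sum G d β μ k ℓ v hk]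
  calc _ ≤ ∑ i ∈ univ.image (fun u => max (ℓ u) (ℓ v)), k v * μ * β⁻¹ ^ i := by
        refine sum_le_sum fun i _ => ?_
        rw [zpow_neg, zpow_natCast, ← inv_pow]
        gcongr
        exact min_le_left _ _
    _ ≤ k v * μ * (β⁻¹ ^ ℓ v / (1 - β⁻¹)) := by
        rw [← mul_sum]
        gcongr
        exact sum_pow_le_pow_div_one_sub (by positivity) (inv_lt_one_of_one_lt₀ hβ) _
          (by simp)
    _ = _ := by
        rw [zpow_neg, zpow_natCast, inv_pow]
        field_simp

lemma assignedDemand_nonneg (A : V → V → Prop) (hd : ∀ e ∈ G.edgeSet, 0 ≤ d e) :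
    0 ≤ assignedDemand G d A v :=
  sum_nonneg fun _ hu => hd _ (G.mem_edgeSet.2 (mem_filter.1 hu).2.1.symm)

lemma assignedDemand_mul_eq_sum (A : V → V → Prop)
    (hAlevel : ∀ u, G.Adj u v → A u v → ℓ v = max (ℓ u) (ℓ v)) (g : ℕ → ℝ) :
    assignedDemand G d A v * g (ℓ v)
      = ∑ u ∈ univ.filter (fun u => G.Adj v u ∧ A u v), d s(u, v) * g (edgeLevel ℓ s(u, v)) := by
  rw [assignedDemand, sum_mul]
  refine sum_congr rfl fun u hu => ?_
  obtain ⟨hadj, hA⟩ := (mem_filter.1 hu).2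
  rw [hAlevel u hadj.symm hA]
  rfl

variable {v} in
lemma ceil_assignedDemand_div_mul_le {c : V → ℝ} {A : V → V → Prop} {ε : ℝ} (hk : 0 < k v)
    (hc : 0 < c v) (hμ : 0 ≤ μ) (hβ : 1 < β) (hε : 0 < ε) (hD : 0 ≤ assignedDemand G d A v)
    (htight : c v / ε < demWeight G d β μ k ℓ v) :
    (⌈assignedDemand G d A v / k v⌉ : ℝ) * c v
      ≤ ε * (β / (β - 1)) * (assignedDemand G d A v * (μ * β ^ (-(ℓ v : ℤ))))
        + ε * demWeight G d β μ k ℓ v := by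
  have hcW : c v ≤ ε * demWeight G d β μ k ℓ v := ((div_lt_iff₀' hε).1 htight).le
  have hW : demWeight G d β μ k ℓ v ≤ k v * (μ * β ^ (-(ℓ v : ℤ)) * (β / (β - 1))) :=
    (demWeight_le_capacity G d β μ k ℓ v hk.le hμ hβ).trans_eq (by ring)
  exact (ceil_div_mul_le_add hD hk hc.le hε.le hcW hW).trans_eq (by ring)

lemma sum_assignedDemand_mul_eq (A : V → V → Prop)
    (hA : ∀ u v, G.Adj u v → (A u v ∧ ¬ A v u) ∨ (A v u ∧ ¬ A u v))
    (hAlevel : ∀ u v, G.Adj u v → A u v → ℓ v = max (ℓ u) (ℓ v)) (g : ℕ → ℝ) :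
    ∑ v ∈ univ.filter (fun v => (univ.filter (fun u => G.Adj v u ∧ A u v)).Nonempty),
      assignedDemand G d A v * g (ℓ v) = ∑ e ∈ G.edgeFinset, d e * g (edgeLevel ℓ e) := by
  rw [sum_filter_of_ne fun v _ hv => ?inactive]
  case inactive =>
    contrapose! hv
    rw [assignedDemand, hv, sum_empty, zero_mul]
  rw [sum_congr rfl fun v _ => assignedDemand_mul_eq_sum G d ℓ v A (fun u => hAlevel u v) g]
  exact G.sum_sum_adj_oriented_eq_sum_edgeFinset A hA fun e => d e * g (edgeLevel ℓ e)

lemma sum_demWeight_le (hk : ∀ v, 0 ≤ k v) (hd : ∀ e ∈ G.edgeSet, 0 ≤ d e) (hμ : 0 ≤ μ)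
    (hβ : 0 < β) (s : Finset V) :
    ∑ v ∈ s, demWeight G d β μ k ℓ v
      ≤ 2 * ∑ e ∈ G.edgeFinset, d e * (μ * β ^ (-(edgeLevel ℓ e : ℤ))) :=
  calc _ ≤ ∑ v ∈ s,
        ∑ u ∈ univ.filter (G.Adj v), d s(u, v) * (μ * β ^ (-(edgeLevel ℓ s(u, v) : ℤ))) :=
        sum_le_sum fun v _ => demWeight_le_sum_adj G d β μ k ℓ v (hk v) hμ hβ
    _ ≤ ∑ v, ∑ u ∈ univ.filter (G.Adj v), d s(u, v) * (μ * β ^ (-(edgeLevel ℓ s(u, v) : ℤ))) :=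
        sum_le_sum_of_subset_of_nonneg (subset_univ s) fun v _ _ => sum_nonneg fun u hu =>
          mul_nonneg (hd _ (G.mem_edgeSet.2 (mem_filter.1 hu).2.symm)) (by positivity)
    _ = _ := by
        rw [G.sum_sum_adj_eq_two_nsmul_sum_edgeFinset
          fun e => d e * (μ * β ^ (-(edgeLevel ℓ e : ℤ))), nsmul_eq_mul, Nat.cast_ofNat]

end LevelScheme

theorem demand_tight_scheme_cost_bound_general {V : Type*} [Fintype V] (G : SimpleGraph V)
    (c : V → ℝ) (k : V → ℝ) (d : Sym2 V → ℝ) (β μ ε : ℝ) (ℓ : V → ℕ) (A : V → V → Prop)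
    (hc : ∀ v, 0 < c v) (hk : ∀ v, 0 < k v) (hd : ∀ e ∈ G.edgeSet, 0 < d e)
    (hβ : 1 < β) (hμ : ∀ v, c v < μ) (hε : 1 ≤ ε)
    -- `A` assigns each edge to exactly one of its endpoints ...
    (hA : ∀ u v, G.Adj u v → (A u v ∧ ¬ A v u) ∨ (A v u ∧ ¬ A u v))
    -- ... whose level equals the edge level
    (hAlevel : ∀ u v, G.Adj u v → A u v → ℓ v = max (ℓ u) (ℓ v))
    -- and `ε`-tight
    (htight : ∀ v, (Finset.univ.filter (fun u => G.Adj v u ∧ A u v)).Nonempty →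
        c v / ε < demWeight G d β μ k ℓ v) :
    ∑ v ∈ Finset.univ.filter (fun v => (Finset.univ.filter (fun u => G.Adj v u ∧ A u v)).Nonempty),
        (⌈assignedDemand G d A v / k v⌉ : ℝ) * c v
      ≤ ε * (2 * β / (β - 1) + 1)
          * ∑ e ∈ G.edgeFinset, d e * (μ * β ^ (-(edgeLevel ℓ e : ℤ))) := by
  rcases isEmpty_or_nonempty V with hV | ⟨⟨v₀⟩⟩
  · simp [univ_eq_empty, eq_empty_of_isEmpty G.edgeFinset]
  have hβ₀ : 0 < β := one_pos.trans hβ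
  have hε₀ : 0 < ε := one_pos.trans_le hε
  have hμ₀ : 0 ≤ μ := (hc v₀).le.trans (hμ v₀).le
  set active := univ.filter fun v => (univ.filter (fun u => G.Adj v u ∧ A u v)).Nonempty
  set T := ∑ e ∈ G.edgeFinset, d e * (μ * β ^ (-(edgeLevel ℓ e : ℤ)))
  have hT₀ : 0 ≤ T := sum_nonneg fun e he =>
    mul_nonneg (hd e (SimpleGraph.mem_edgeFinset.1 he)).le (by positivity)
  have hratio : 1 ≤ β / (β - 1) := (one_le_div (by linarith)).2 (by linarith)
  calc _ ≤ ∑ v ∈ active, (ε * (β / (β - 1)) * (assignedDemand G d A v * (μ * β ^ (-(ℓ v : ℤ))))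
          + ε * demWeight G d β μ k ℓ v) := sum_le_sum fun v hv =>
        ceil_assignedDemand_div_mul_le G d β μ k ℓ (hk v) (hc v) hμ₀ hβ hε₀
          (assignedDemand_nonneg G d v A fun e he => (hd e he).le)
          (htight v (mem_filter.1 hv).2)
    _ = ε * (β / (β - 1)) * T + ε * ∑ v ∈ active, demWeight G d β μ k ℓ v := by
        rw [sum_add_distrib, ← mul_sum, ← mul_sum,
          sum_assignedDemand_mul_eq G d ℓ A hA hAlevel fun i => μ * β ^ (-(i : ℤ))]
    _ ≤ ε * (β / (β - 1)) * T + ε * (2 * T) := by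
        gcongr
        exact sum_demWeight_le G d β μ k ℓ (fun v => (hk v).le) (fun e he => (hd e he).le)
          hμ₀ hβ₀ active
    _ ≤ ε * (2 * β / (β - 1) + 1) * T := by
        rw [mul_div_assoc]
        linarith [mul_nonneg (mul_nonneg hε₀.le hT₀) (sub_nonneg.2 hratio)]

/-- Capacitated vertex cover with non-uniform unsplittable demands, approximation bound:
given an `ε`-tight valid level scheme on `G` (with demand-based weights) and a consistent edge
assignment `δ`,
`Σ_{v : δ(v) ≠ ∅} ⌈(Σ_{e ∈ δ(v)} d_e)/k_v⌉·c_v ≤ ε·(2β/(β − 1) + 1)·Σ_{e ∈ E} d_e·μ·β^(−ℓ(e))`. -/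
theorem demand_tight_scheme_cost_bound {V : Type*} [Fintype V] (G : SimpleGraph V)
    (c : V → ℝ) (k : V → ℝ) (d : Sym2 V → ℝ) (β μ ε : ℝ) (ℓ : V → ℕ) (A : V → V → Prop)
    (hc : ∀ v, 0 < c v) (hk : ∀ v, 0 < k v) (hd : ∀ e ∈ G.edgeSet, 0 < d e)
    (hβ : 1 < β) (hμ : ∀ v, c v < μ) (hε : 1 ≤ ε)
    -- `A` assigns each edge to exactly one of its endpoints ...
    (hA : ∀ u v, G.Adj u v → (A u v ∧ ¬ A v u) ∨ (A v u ∧ ¬ A u v))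
    -- ... whose level equals the edge level
    (hAlevel : ∀ u v, G.Adj u v → A u v → ℓ v = max (ℓ u) (ℓ v))
    -- the scheme is valid
    (hvalid : ∀ v, demWeight G d β μ k ℓ v ≤ c v)
    -- and `ε`-tight
    (htight : ∀ v, (Finset.univ.filter (fun u => G.Adj v u ∧ A u v)).Nonempty →
        c v / ε < demWeight G d β μ k ℓ v) :
    ∑ v ∈ Finset.univ.filter (fun v => (Finset.univ.filter (fun u => G.Adj v u ∧ A u v)).Nonempty),
        (⌈assignedDemand G d A v / k v⌉ : ℝ) * c v
      ≤ ε * (2 * β / (β - 1) + 1)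
          * ∑ e ∈ G.edgeFinset, d e * (μ * β ^ (-(edgeLevel ℓ e : ℤ))) :=
  demand_tight_scheme_cost_bound_general G c k d β μ ε ℓ A hc hk hd hβ hμ hε hA hAlevel htight
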